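/- Let I ⊂ C[x_0,...,x_n, Z_{jk} : 0 ≤ j < k ≤ n] be the ideal generated by the elements x_j^{a_j} Z_{ik} − x_k^{a_k} Z_{ij} − x_i^{a_i} Z_{jk} for all 0 ≤ i < j < k ≤ n, together with the quadratic Plücker relations Z_{ij} Z_{kl} − Z_{ik} Z_{jl} + Z_{il} Z_{jk} for i < j < k < l. Then I is a prime ideal. -/

import Mathlib

open MvPolynomial

/-- Index type for the variables `Z_{jk}`, `0 ≤ j < k ≤ n`. -/
abbrev ZIdx (m : ℕ) := {p : Fin m × Fin m // p.1 < p.2}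

namespace Stmt4

variable (n : ℕ) (a : Fin (n + 1) → ℕ)

abbrev Vt := Fin (n + 1) ⊕ ZIdx (n + 1)
abbrev Pt := MvPolynomial (Vt n) ℂ
abbrev Dt := MvPolynomial (Fin (n + 1) ⊕ Fin (n + 1)) ℂ

def Gens : Set (Pt n) :=
  {f : MvPolynomial (Fin (n + 1) ⊕ ZIdx (n + 1)) ℂ |
      ∃ (i j k : Fin (n + 1)) (hij : i < j) (hjk : j < k),
        f = X (Sum.inl j) ^ a j * X (Sum.inr ⟨(i, k), hij.trans hjk⟩)
          - X (Sum.inl k) ^ a k * X (Sum.inr ⟨(i, j), hij⟩)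
          - X (Sum.inl i) ^ a i * X (Sum.inr ⟨(j, k), hjk⟩)} ∪
  {f : MvPolynomial (Fin (n + 1) ⊕ ZIdx (n + 1)) ℂ |
      ∃ (i j k l : Fin (n + 1)) (hij : i < j) (hjk : j < k) (hkl : k < l),
        f = X (Sum.inr ⟨(i, j), hij⟩) * X (Sum.inr ⟨(k, l), hkl⟩)
          - X (Sum.inr ⟨(i, k), hij.trans hjk⟩) * X (Sum.inr ⟨(j, l), hjk.trans hkl⟩)
          + X (Sum.inr ⟨(i, l), (hij.trans hjk).trans hkl⟩)
              * X (Sum.inr ⟨(j, k), hjk⟩)}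

noncomputable def Ig : Ideal (Pt n) := Ideal.span (Gens n a)

noncomputable def φm : Vt n → Dt n
  | .inl i => X (.inl i)
  | .inr p => X (.inl p.1.1) ^ a p.1.1 * X (.inr p.1.2)
      - X (.inl p.1.2) ^ a p.1.2 * X (.inr p.1.1)

noncomputable def φh : Pt n →ₐ[ℂ] Dt n := aeval (φm n a)

lemma gens_ker : ∀ f ∈ Gens n a, φh n a f = 0 := by
  rintro f (⟨i, j, k, hij, hjk, rfl⟩ | ⟨i, j, k, l, hij, hjk, hkl, rfl⟩) <;>
    simp only [φh, map_sub, map_add, map_mul, map_pow, aeval_X, φm] <;> ring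

def flen (d : ℕ) : ℕ := d * (2 * n + 2) - d * d

/-- weight of a variable -/
def wv : Vt n → ℕ := fun v => match v with
  | .inl _ => 0
  | .inr p => flen n (p.1.2.val - p.1.1.val)

/-- Z-weight of a monomial -/
def Wt (σ : Vt n →₀ ℕ) : ℕ := ∑ v : Vt n, σ v * wv n v

lemma Wt_add (σ τ : Vt n →₀ ℕ) : Wt n (σ + τ) = Wt n σ + Wt n τ := by
  simp [Wt, Finsupp.add_apply, add_mul, Finset.sum_add_distrib]

lemma Wt_single (v : Vt n) (c : ℕ) : Wt n (Finsupp.single v c) = c * wv n v := by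
  simp only [Wt, Finsupp.single_apply]
  rw [Finset.sum_congr rfl (fun b _ => by
    rw [show (if v = b then c else 0) * wv n b = if b = v then c * wv n b else 0 by
      by_cases h : b = v
      · simp [h]
      · have h2 : v ≠ b := fun e => h e.symm
        simp [h, h2]]),
    Finset.sum_ite_eq' Finset.univ v]
  simp

/-- standard monomials -/
def Std (σ : Vt n →₀ ℕ) : Prop :=
  (∀ (i j k l : Fin (n + 1)) (hik : i < k) (hjl : j < l), i < j → j < k → k < l →
      σ (Sum.inr ⟨(i, k), hik⟩) = 0 ∨ σ (Sum.inr ⟨(j, l), hjl⟩) = 0) ∧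
  (∀ (i j k : Fin (n + 1)) (hik : i < k), i < j → j < k →
      0 < σ (Sum.inr ⟨(i, k), hik⟩) → σ (Sum.inl j) < a j)


lemma flen_lt {x y : ℕ} (hxy : x < y) (hy : y ≤ n + 1) : flen n x < flen n y := by
  have hx2 : x * x ≤ x * (2 * n + 2) := Nat.mul_le_mul_left _ (by omega)
  have hy2 : y * y ≤ y * (2 * n + 2) := Nat.mul_le_mul_left _ (by omega)
  unfold flen
  zify [hx2, hy2]
  nlinarith

lemma flen_cross1 {A B C : ℕ} (hA : 1 ≤ A) (hB : 1 ≤ B) (hC : 1 ≤ C)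
    (h : A + B + C ≤ n) :
    flen n (A + B + C) + flen n B < flen n (A + B) + flen n (B + C) := by
  have h1 : (A+B+C) * (A+B+C) ≤ (A+B+C) * (2*n+2) := Nat.mul_le_mul_left _ (by omega)
  have h2 : B * B ≤ B * (2*n+2) := Nat.mul_le_mul_left _ (by omega)
  have h3 : (A+B) * (A+B) ≤ (A+B) * (2*n+2) := Nat.mul_le_mul_left _ (by omega)
  have h4 : (B+C) * (B+C) ≤ (B+C) * (2*n+2) := Nat.mul_le_mul_left _ (by omega)
  unfold flen
  zify [h1, h2, h3, h4]
  nlinarith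

lemma flen_cross2 {A B C : ℕ} (hA : 1 ≤ A) (hB : 1 ≤ B) (hC : 1 ≤ C)
    (h : A + B + C ≤ n) :
    flen n A + flen n C < flen n (A + B) + flen n (B + C) := by
  have h1 : A * A ≤ A * (2*n+2) := Nat.mul_le_mul_left _ (by omega)
  have h2 : C * C ≤ C * (2*n+2) := Nat.mul_le_mul_left _ (by omega)
  have h3 : (A+B) * (A+B) ≤ (A+B) * (2*n+2) := Nat.mul_le_mul_left _ (by omega)
  have h4 : (B+C) * (B+C) ≤ (B+C) * (2*n+2) := Nat.mul_le_mul_left _ (by omega)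
  unfold flen
  zify [h1, h2, h3, h4]
  nlinarith

lemma decomp2 {M : Type*} [DecidableEq M] (σ : M →₀ ℕ) (u v : M) (hne : u ≠ v)
    (cu cv : ℕ) (hu : cu ≤ σ u) (hv : cv ≤ σ v) :
    ∃ τ, σ = τ + (Finsupp.single u cu + Finsupp.single v cv) := by
  refine ⟨σ - Finsupp.single u cu - Finsupp.single v cv, ?_⟩
  ext w
  simp only [Finsupp.add_apply, Finsupp.tsub_apply, Finsupp.single_apply]
  by_cases h1 : u = w
  · subst h1
    have : ¬ (v = u) := fun e => hne e.symm
    rw [if_pos rfl, if_neg this]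
    omega
  · by_cases h2 : v = w
    · subst h2
      rw [if_pos rfl, if_neg h1]
      omega
    · rw [if_neg h1, if_neg h2]
      omega

lemma mon_decomp (ρ : Vt n →₀ ℕ) (u v : Vt n) (cu cv : ℕ) :
    (monomial (ρ + (Finsupp.single u cu + Finsupp.single v cv)) (1:ℂ) : Pt n)
      = monomial ρ 1 * (X u ^ cu * X v ^ cv) := by
  rw [X_pow_eq_monomial, X_pow_eq_monomial, monomial_mul, monomial_mul]
  simp

lemma Ig_le_ker : Ig n a ≤ RingHom.ker (φh n a).toRingHom := by
  rw [Ig, Ideal.span_le]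
  intro f hf
  exact gens_ker n a f hf

lemma step_cross (σ : Vt n →₀ ℕ) (i j k l : Fin (n + 1)) (hij : i < j) (hjk : j < k)
    (hkl : k < l)
    (h1 : 0 < σ (Sum.inr ⟨(i, k), hij.trans hjk⟩))
    (h2 : 0 < σ (Sum.inr ⟨(j, l), hjk.trans hkl⟩)) :
    ∃ σ₁ σ₂ : Vt n →₀ ℕ, Wt n σ₁ < Wt n σ ∧ Wt n σ₂ < Wt n σ ∧
      (monomial σ (1:ℂ) : Pt n) - monomial σ₁ 1 - monomial σ₂ 1 ∈ Ig n a := by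
  have vij : i.val < j.val := hij
  have vjk : j.val < k.val := hjk
  have vkl : k.val < l.val := hkl
  have vl : l.val < n + 1 := l.isLt
  have hne : (Sum.inr ⟨(i, k), hij.trans hjk⟩ : Vt n) ≠ Sum.inr ⟨(j, l), hjk.trans hkl⟩ := by
    simp only [ne_eq, Sum.inr.injEq, Subtype.mk.injEq, Prod.mk.injEq, not_and]
    rintro rfl
    exact absurd rfl hij.ne
  obtain ⟨τ, hτ⟩ := decomp2 σ _ _ hne 1 1 h1 h2
  refine ⟨τ + (Finsupp.single (Sum.inr ⟨(i, j), hij⟩) 1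
            + Finsupp.single (Sum.inr ⟨(k, l), hkl⟩) 1),
          τ + (Finsupp.single (Sum.inr ⟨(i, l), (hij.trans hjk).trans hkl⟩) 1
            + Finsupp.single (Sum.inr ⟨(j, k), hjk⟩) 1), ?_, ?_, ?_⟩
  · rw [hτ, Wt_add, Wt_add, Wt_add, Wt_add, Wt_single, Wt_single, Wt_single, Wt_single]
    simp only [wv, one_mul]
    have e1 : k.val - i.val = (j.val - i.val) + (k.val - j.val) := by omega
    have e2 : l.val - j.val = (k.val - j.val) + (l.val - k.val) := by omega
    rw [e1, e2]
    have := flen_cross2 n (A := j.val - i.val) (B := k.val - j.val) (C := l.val - k.val)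
      (by omega) (by omega) (by omega) (by omega)
    omega
  · rw [hτ, Wt_add, Wt_add, Wt_add, Wt_add, Wt_single, Wt_single, Wt_single, Wt_single]
    simp only [wv, one_mul]
    have e1 : k.val - i.val = (j.val - i.val) + (k.val - j.val) := by omega
    have e2 : l.val - j.val = (k.val - j.val) + (l.val - k.val) := by omega
    have e3 : l.val - i.val = (j.val - i.val) + (k.val - j.val) + (l.val - k.val) := by omega
    rw [e1, e2, e3]
    have := flen_cross1 n (A := j.val - i.val) (B := k.val - j.val) (C := l.val - k.val)
      (by omega) (by omega) (by omega) (by omega)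
    omega
  · have hG : (X (Sum.inr ⟨(i, j), hij⟩) * X (Sum.inr ⟨(k, l), hkl⟩)
        - X (Sum.inr ⟨(i, k), hij.trans hjk⟩) * X (Sum.inr ⟨(j, l), hjk.trans hkl⟩)
        + X (Sum.inr ⟨(i, l), (hij.trans hjk).trans hkl⟩) * X (Sum.inr ⟨(j, k), hjk⟩)
        : Pt n) ∈ Gens n a := Or.inr ⟨i, j, k, l, hij, hjk, hkl, rfl⟩
    have hmem := Ideal.mul_mem_left (Ig n a) (monomial τ 1) (Ideal.subset_span hG)
    rw [hτ, mon_decomp, mon_decomp, mon_decomp]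
    have hiden : (monomial τ 1 : Pt n) * (X (Sum.inr ⟨(i, k), hij.trans hjk⟩) ^ 1
          * X (Sum.inr ⟨(j, l), hjk.trans hkl⟩) ^ 1)
        - monomial τ 1 * (X (Sum.inr ⟨(i, j), hij⟩) ^ 1 * X (Sum.inr ⟨(k, l), hkl⟩) ^ 1)
        - monomial τ 1 * (X (Sum.inr ⟨(i, l), (hij.trans hjk).trans hkl⟩) ^ 1
          * X (Sum.inr ⟨(j, k), hjk⟩) ^ 1)
        = -(monomial τ 1 * (X (Sum.inr ⟨(i, j), hij⟩) * X (Sum.inr ⟨(k, l), hkl⟩)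
        - X (Sum.inr ⟨(i, k), hij.trans hjk⟩) * X (Sum.inr ⟨(j, l), hjk.trans hkl⟩)
        + X (Sum.inr ⟨(i, l), (hij.trans hjk).trans hkl⟩) * X (Sum.inr ⟨(j, k), hjk⟩))) := by
      ring
    rw [hiden]
    exact neg_mem hmem

lemma step_s2 (σ : Vt n →₀ ℕ) (i j k : Fin (n + 1)) (hij : i < j) (hjk : j < k)
    (h1 : 0 < σ (Sum.inr ⟨(i, k), hij.trans hjk⟩))
    (h2 : a j ≤ σ (Sum.inl j)) :
    ∃ σ₁ σ₂ : Vt n →₀ ℕ, Wt n σ₁ < Wt n σ ∧ Wt n σ₂ < Wt n σ ∧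
      (monomial σ (1:ℂ) : Pt n) - monomial σ₁ 1 - monomial σ₂ 1 ∈ Ig n a := by
  have vij : i.val < j.val := hij
  have vjk : j.val < k.val := hjk
  have vk : k.val < n + 1 := k.isLt
  have hne : (Sum.inl j : Vt n) ≠ Sum.inr ⟨(i, k), hij.trans hjk⟩ := by simp
  obtain ⟨τ, hτ⟩ := decomp2 σ _ _ hne (a j) 1 h2 h1
  refine ⟨τ + (Finsupp.single (Sum.inl k) (a k) + Finsupp.single (Sum.inr ⟨(i, j), hij⟩) 1),
          τ + (Finsupp.single (Sum.inl i) (a i) + Finsupp.single (Sum.inr ⟨(j, k), hjk⟩) 1),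
          ?_, ?_, ?_⟩
  · rw [hτ, Wt_add, Wt_add, Wt_add, Wt_add, Wt_single, Wt_single, Wt_single, Wt_single]
    simp only [wv, one_mul, Nat.mul_zero]
    have := flen_lt n (x := j.val - i.val) (y := k.val - i.val) (by omega) (by omega)
    omega
  · rw [hτ, Wt_add, Wt_add, Wt_add, Wt_add, Wt_single, Wt_single, Wt_single, Wt_single]
    simp only [wv, one_mul, Nat.mul_zero]
    have := flen_lt n (x := k.val - j.val) (y := k.val - i.val) (by omega) (by omega)
    omega
  · have hG : (X (Sum.inl j) ^ a j * X (Sum.inr ⟨(i, k), hij.trans hjk⟩)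
        - X (Sum.inl k) ^ a k * X (Sum.inr ⟨(i, j), hij⟩)
        - X (Sum.inl i) ^ a i * X (Sum.inr ⟨(j, k), hjk⟩) : Pt n) ∈ Gens n a :=
      Or.inl ⟨i, j, k, hij, hjk, rfl⟩
    have hmem := Ideal.mul_mem_left (Ig n a) (monomial τ 1) (Ideal.subset_span hG)
    rw [hτ, mon_decomp, mon_decomp, mon_decomp]
    have hiden : (monomial τ 1 : Pt n) * (X (Sum.inl j) ^ a j
          * X (Sum.inr ⟨(i, k), hij.trans hjk⟩) ^ 1)
        - monomial τ 1 * (X (Sum.inl k) ^ a k * X (Sum.inr ⟨(i, j), hij⟩) ^ 1)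
        - monomial τ 1 * (X (Sum.inl i) ^ a i * X (Sum.inr ⟨(j, k), hjk⟩) ^ 1)
        = monomial τ 1 * (X (Sum.inl j) ^ a j * X (Sum.inr ⟨(i, k), hij.trans hjk⟩)
        - X (Sum.inl k) ^ a k * X (Sum.inr ⟨(i, j), hij⟩)
        - X (Sum.inl i) ^ a i * X (Sum.inr ⟨(j, k), hjk⟩)) := by
      ring
    rw [hiden]
    exact hmem

lemma reduce : ∀ (N : ℕ) (σ : Vt n →₀ ℕ), Wt n σ ≤ N →
    ∃ g : Pt n, (monomial σ (1:ℂ) - g ∈ Ig n a) ∧ ∀ τ ∈ g.support, Std n a τ := by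
  intro N
  induction N using Nat.strong_induction_on with
  | _ N IH =>
    intro σ hW
    by_cases hstd : Std n a σ
    · refine ⟨monomial σ 1, by simp, ?_⟩
      intro τ hτ
      rw [support_monomial] at hτ
      simp only [one_ne_zero, if_false, Finset.mem_singleton] at hτ
      subst hτ
      exact hstd
    · have hstep : ∃ σ₁ σ₂ : Vt n →₀ ℕ, Wt n σ₁ < Wt n σ ∧ Wt n σ₂ < Wt n σ ∧
          (monomial σ (1:ℂ) : Pt n) - monomial σ₁ 1 - monomial σ₂ 1 ∈ Ig n a := by
        rw [Std, not_and_or] at hstd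
        rcases hstd with hA | hB
        · push_neg at hA
          obtain ⟨i, j, k, l, hik, hjl, hij, hjk, hkl, hz1, hz2⟩ := hA
          exact step_cross n a σ i j k l hij hjk hkl
            (Nat.pos_of_ne_zero hz1) (Nat.pos_of_ne_zero hz2)
        · push_neg at hB
          obtain ⟨i, j, k, hik, hij, hjk, hz1, hz2⟩ := hB
          exact step_s2 n a σ i j k hij hjk hz1 hz2
      obtain ⟨σ₁, σ₂, hw1, hw2, hmem⟩ := hstep
      obtain ⟨g₁, hg₁, hs₁⟩ := IH (Wt n σ₁) (lt_of_lt_of_le hw1 hW) σ₁ le_rfl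
      obtain ⟨g₂, hg₂, hs₂⟩ := IH (Wt n σ₂) (lt_of_lt_of_le hw2 hW) σ₂ le_rfl
      refine ⟨g₁ + g₂, ?_, ?_⟩
      · have hiden : monomial σ (1:ℂ) - (g₁ + g₂) =
            (monomial σ 1 - monomial σ₁ 1 - monomial σ₂ 1)
            + (monomial σ₁ 1 - g₁) + (monomial σ₂ 1 - g₂) := by ring
        rw [hiden]
        exact add_mem (add_mem hmem hg₁) hg₂
      · intro τ hτ
        rcases Finset.mem_union.mp (support_add hτ) with h | h
        exacts [hs₁ τ h, hs₂ τ h]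

lemma spanStd (f : Pt n) : ∃ g : Pt n, f - g ∈ Ig n a ∧ ∀ τ ∈ g.support, Std n a τ := by
  choose gm hgm hstdm using fun σ : Vt n →₀ ℕ => reduce n a (Wt n σ) σ le_rfl
  refine ⟨∑ σ ∈ f.support, coeff σ f • gm σ, ?_, ?_⟩
  · have h1 : ∑ σ ∈ f.support, coeff σ f • (monomial σ (1:ℂ) : Pt n) = f := by
      conv_rhs => rw [as_sum f]
      exact Finset.sum_congr rfl fun σ _ => by rw [smul_monomial, smul_eq_mul, mul_one]
    have hsum : f - ∑ σ ∈ f.support, coeff σ f • gm σ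
        = ∑ σ ∈ f.support, coeff σ f • (monomial σ 1 - gm σ) := by
      simp only [smul_sub]
      rw [Finset.sum_sub_distrib, h1]
    rw [hsum]
    refine Ideal.sum_mem _ (fun σ _ => ?_)
    rw [smul_eq_C_mul]
    exact Ideal.mul_mem_left _ _ (hgm σ)
  · intro τ hτ
    obtain ⟨σ, _, hσ⟩ := Finset.mem_biUnion.mp (support_sum hτ)
    exact hstdm σ τ (support_smul hσ)

/-! ### The leading-monomial machinery on the target ring -/

/-- count of Z-variables with left endpoint `i` (function version) -/
def mLf (c : ZIdx (n + 1) → ℕ) (i : Fin (n + 1)) : ℕ :=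
  ∑ p : ZIdx (n + 1), if p.1.1 = i then c p else 0

/-- count of Z-variables with right endpoint `k` (function version) -/
def mRf (c : ZIdx (n + 1) → ℕ) (k : Fin (n + 1)) : ℕ :=
  ∑ p : ZIdx (n + 1), if p.1.2 = k then c p else 0

def mL (σ : Vt n →₀ ℕ) (i : Fin (n + 1)) : ℕ := mLf n (fun p => σ (Sum.inr p)) i
def mR (σ : Vt n →₀ ℕ) (k : Fin (n + 1)) : ℕ := mRf n (fun p => σ (Sum.inr p)) k

def Lfun (σ : Vt n →₀ ℕ) : (Fin (n + 1) ⊕ Fin (n + 1)) → ℕ :=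
  Sum.elim (fun i => σ (Sum.inl i) + a i * mL n σ i) (fun k => mR n σ k)

noncomputable def Lm (σ : Vt n →₀ ℕ) : (Fin (n + 1) ⊕ Fin (n + 1)) →₀ ℕ :=
  Finsupp.equivFunOnFinite.symm (Lfun n a σ)

lemma Lm_apply (σ : Vt n →₀ ℕ) (u : Fin (n + 1) ⊕ Fin (n + 1)) :
    Lm n a σ u = Lfun n a σ u :=
  rfl

/-- weight of a target variable: `y_k` has weight `k`, `x_i` has weight 0 -/
def wyv : (Fin (n + 1) ⊕ Fin (n + 1)) → ℕ := Sum.elim (fun _ => 0) Fin.val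

def wD (τ : (Fin (n + 1) ⊕ Fin (n + 1)) →₀ ℕ) : ℕ := ∑ u, τ u * wyv n u

lemma wD_add (σ τ) : wD n (σ + τ) = wD n σ + wD n τ := by
  simp [wD, Finsupp.add_apply, add_mul, Finset.sum_add_distrib]

lemma wD_single (v : Fin (n + 1) ⊕ Fin (n + 1)) (c : ℕ) :
    wD n (Finsupp.single v c) = c * wyv n v := by
  simp only [wD, Finsupp.single_apply]
  rw [Finset.sum_congr rfl (fun b _ => by
    rw [show (if v = b then c else 0) * wyv n b = if b = v then c * wyv n b else 0 by
      by_cases h : b = v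
      · simp [h]
      · have h2 : v ≠ b := fun e => h e.symm
        simp [h, h2]]),
    Finset.sum_ite_eq' Finset.univ v]
  simp

/-- `f` has unique `wD`-maximal monomial `m`, appearing with coefficient 1 -/
def Qp (f : Dt n) (m : (Fin (n + 1) ⊕ Fin (n + 1)) →₀ ℕ) : Prop :=
  (∀ τ ∈ f.support, wD n τ ≤ wD n m ∧ (wD n τ = wD n m → τ = m)) ∧ coeff m f = 1

lemma Qp_mul_monomial {f : Dt n} {m : (Fin (n + 1) ⊕ Fin (n + 1)) →₀ ℕ}
    (hf : Qp n f m) (u : (Fin (n + 1) ⊕ Fin (n + 1)) →₀ ℕ) :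
    Qp n (f * monomial u 1) (m + u) := by
  constructor
  · intro τ hτ
    obtain ⟨ρ, hρ, δ, hδ, hsum⟩ := Finset.mem_add.mp (support_mul _ _ hτ)
    rw [support_monomial, if_neg one_ne_zero, Finset.mem_singleton] at hδ
    subst hδ
    subst hsum
    obtain ⟨h1, h2⟩ := hf.1 ρ hρ
    rw [wD_add, wD_add]
    exact ⟨by omega, fun h => by rw [h2 (by omega)]⟩
  · rw [coeff_mul_monomial, hf.2, mul_one]

lemma Qp_mul_sub {f : Dt n} {m : (Fin (n + 1) ⊕ Fin (n + 1)) →₀ ℕ}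
    (hf : Qp n f m) (u v : (Fin (n + 1) ⊕ Fin (n + 1)) →₀ ℕ)
    (huv : wD n v < wD n u) :
    Qp n (f * (monomial u 1 - monomial v 1)) (m + u) := by
  have hfu := Qp_mul_monomial n hf u
  have hrw : f * (monomial u 1 - monomial v 1) = f * monomial u 1 - f * monomial v 1 := by
    ring
  constructor
  · intro τ hτ
    rw [hrw] at hτ
    rcases Finset.mem_union.mp (support_sub _ _ _ hτ) with h | h
    · exact hfu.1 τ h
    · obtain ⟨ρ, hρ, δ, hδ, hsum⟩ := Finset.mem_add.mp (support_mul _ _ h)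
      rw [support_monomial, if_neg one_ne_zero, Finset.mem_singleton] at hδ
      subst hδ
      subst hsum
      have h1 := (hf.1 ρ hρ).1
      rw [wD_add, wD_add]
      constructor
      · omega
      · intro h; omega
  · rw [hrw, coeff_sub, coeff_mul_monomial, hf.2, mul_one]
    rw [coeff_mul_monomial']
    split_ifs with hle
    · have hts : wD n (m + u - v) + wD n v = wD n (m + u) := by
        rw [← wD_add, tsub_add_cancel_of_le hle]
      have hgt : wD n m < wD n (m + u - v) := by
        rw [wD_add] at hts; omega
      have : coeff (m + u - v) f = 0 := by
        rw [← notMem_support_iff]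
        intro hmem
        exact absurd ((hf.1 _ hmem).1) (by omega)
      rw [this, zero_mul, sub_zero]
    · rw [sub_zero]

lemma sum_ind {β : Type*} [Fintype β] [DecidableEq β] (z : β) (P : β → Prop)
    [DecidablePred P] (c : ℕ) :
    (∑ q : β, if P q then (if z = q then c else 0) else 0) = if P z then c else 0 := by
  rw [Finset.sum_congr rfl (fun q _ => show _ = if z = q then (if P q then c else 0) else 0 by
      by_cases h1 : z = q <;> by_cases h2 : P q <;> simp [h1, h2])]
  rw [Finset.sum_ite_eq Finset.univ z]
  simp

lemma mLf_add (c d : ZIdx (n + 1) → ℕ) (i : Fin (n + 1)) :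
    mLf n (fun p => c p + d p) i = mLf n c i + mLf n d i := by
  simp only [mLf]
  rw [← Finset.sum_add_distrib]
  exact Finset.sum_congr rfl fun p _ => by split_ifs <;> simp

lemma mRf_add (c d : ZIdx (n + 1) → ℕ) (k : Fin (n + 1)) :
    mRf n (fun p => c p + d p) k = mRf n c k + mRf n d k := by
  simp only [mRf]
  rw [← Finset.sum_add_distrib]
  exact Finset.sum_congr rfl fun p _ => by split_ifs <;> simp

lemma tot_add (σ τ : Vt n →₀ ℕ) :
    (∑ u : Vt n, (σ + τ) u) = (∑ u : Vt n, σ u) + ∑ u : Vt n, τ u := by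
  rw [← Finset.sum_add_distrib]
  exact Finset.sum_congr rfl fun u _ => Finsupp.add_apply _ _ _

lemma tot_single (v : Vt n) (c : ℕ) : (∑ u : Vt n, (Finsupp.single v c) u) = c := by
  rw [Finset.sum_congr rfl fun u _ => Finsupp.single_apply, Finset.sum_ite_eq Finset.univ v]
  simp

lemma apply_add_single_inr (σ : Vt n →₀ ℕ) (p q : ZIdx (n + 1)) :
    (σ + (Finsupp.single (Sum.inr p) 1 : Vt n →₀ ℕ)) (Sum.inr q)
      = σ (Sum.inr q) + (if p = q then 1 else 0) := by
  rw [Finsupp.add_apply, Finsupp.single_apply]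
  congr 1
  by_cases e : p = q
  · simp [e]
  · rw [if_neg e, if_neg (by simpa using e)]

lemma apply_add_single_inl_inr (σ : Vt n →₀ ℕ) (i : Fin (n + 1)) (c : ℕ) (q : ZIdx (n + 1)) :
    (σ + (Finsupp.single (Sum.inl i) c : Vt n →₀ ℕ)) (Sum.inr q) = σ (Sum.inr q) := by
  rw [Finsupp.add_apply, Finsupp.single_apply, if_neg (by simp), add_zero]

lemma apply_add_single_inr_inl (σ : Vt n →₀ ℕ) (p : ZIdx (n + 1)) (i : Fin (n + 1)) :
    (σ + (Finsupp.single (Sum.inr p) 1 : Vt n →₀ ℕ)) (Sum.inl i) = σ (Sum.inl i) := by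
  rw [Finsupp.add_apply, Finsupp.single_apply, if_neg (by simp), add_zero]

lemma apply_add_single_inl_inl (σ : Vt n →₀ ℕ) (i : Fin (n + 1)) (c : ℕ) (i' : Fin (n + 1)) :
    (σ + (Finsupp.single (Sum.inl i) c : Vt n →₀ ℕ)) (Sum.inl i')
      = σ (Sum.inl i') + (if i = i' then c else 0) := by
  rw [Finsupp.add_apply, Finsupp.single_apply]
  congr 1
  by_cases e : i = i'
  · simp [e]
  · rw [if_neg e, if_neg (by simpa using e)]

lemma decomp1 {M : Type*} [DecidableEq M] (σ : M →₀ ℕ) (v : M) (h : 0 < σ v) :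
    ∃ τ, σ = τ + Finsupp.single v 1 := by
  refine ⟨σ - Finsupp.single v 1, ?_⟩
  ext w
  simp only [Finsupp.add_apply, Finsupp.tsub_apply, Finsupp.single_apply]
  by_cases e : v = w
  · subst e; rw [if_pos rfl]; omega
  · rw [if_neg e]; omega

lemma mL_add_single_inl (σ : Vt n →₀ ℕ) (i : Fin (n + 1)) (c : ℕ) (i' : Fin (n + 1)) :
    mL n (σ + Finsupp.single (Sum.inl i) c) i' = mL n σ i' := by
  simp only [mL, mLf]
  refine Finset.sum_congr rfl fun p _ => ?_
  rw [apply_add_single_inl_inr]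

lemma mR_add_single_inl (σ : Vt n →₀ ℕ) (i : Fin (n + 1)) (c : ℕ) (k' : Fin (n + 1)) :
    mR n (σ + Finsupp.single (Sum.inl i) c) k' = mR n σ k' := by
  simp only [mR, mRf]
  refine Finset.sum_congr rfl fun p _ => ?_
  rw [apply_add_single_inl_inr]

lemma mL_add_single_inr (σ : Vt n →₀ ℕ) (p : ZIdx (n + 1)) (i' : Fin (n + 1)) :
    mL n (σ + Finsupp.single (Sum.inr p) 1) i' = mL n σ i' + (if p.1.1 = i' then 1 else 0) := by
  simp only [mL]
  have hfn : ∀ q : ZIdx (n + 1), (σ + (Finsupp.single (Sum.inr p) 1 : Vt n →₀ ℕ)) (Sum.inr q)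
      = σ (Sum.inr q) + (if p = q then 1 else 0) := apply_add_single_inr n σ p
  have h2 : mLf n (fun q => (σ + (Finsupp.single (Sum.inr p) 1 : Vt n →₀ ℕ)) (Sum.inr q)) i'
      = mLf n (fun q => σ (Sum.inr q) + (if p = q then 1 else 0)) i' := by
    simp only [mLf]
    exact Finset.sum_congr rfl fun q _ => by rw [hfn q]
  rw [h2, mLf_add]
  congr 1
  exact sum_ind p (fun q => q.1.1 = i') 1

lemma mR_add_single_inr (σ : Vt n →₀ ℕ) (p : ZIdx (n + 1)) (k' : Fin (n + 1)) :
    mR n (σ + Finsupp.single (Sum.inr p) 1) k' = mR n σ k' + (if p.1.2 = k' then 1 else 0) := by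
  simp only [mR]
  have hfn : ∀ q : ZIdx (n + 1), (σ + (Finsupp.single (Sum.inr p) 1 : Vt n →₀ ℕ)) (Sum.inr q)
      = σ (Sum.inr q) + (if p = q then 1 else 0) := apply_add_single_inr n σ p
  have h2 : mRf n (fun q => (σ + (Finsupp.single (Sum.inr p) 1 : Vt n →₀ ℕ)) (Sum.inr q)) k'
      = mRf n (fun q => σ (Sum.inr q) + (if p = q then 1 else 0)) k' := by
    simp only [mRf]
    exact Finset.sum_congr rfl fun q _ => by rw [hfn q]
  rw [h2, mRf_add]
  congr 1
  exact sum_ind p (fun q => q.1.2 = k') 1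

lemma Lm_add_single_inl (σ : Vt n →₀ ℕ) (i : Fin (n + 1)) (c : ℕ) :
    Lm n a (σ + Finsupp.single (Sum.inl i) c) = Lm n a σ + Finsupp.single (Sum.inl i) c := by
  ext u
  rw [Finsupp.add_apply, Lm_apply, Lm_apply]
  cases u with
  | inl i' =>
    simp only [Lfun, Sum.elim_inl]
    rw [mL_add_single_inl, apply_add_single_inl_inl]
    have h2 : (Finsupp.single (Sum.inl i : Fin (n+1) ⊕ Fin (n+1)) c) (Sum.inl i')
        = if i = i' then c else 0 := by
      simp [Finsupp.single_apply]
    rw [h2]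
    ring
  | inr k' =>
    simp only [Lfun, Sum.elim_inr]
    rw [mR_add_single_inl]
    have h2 : (Finsupp.single (Sum.inl i : Fin (n+1) ⊕ Fin (n+1)) c) (Sum.inr k') = 0 := by
      simp [Finsupp.single_apply]
    rw [h2, add_zero]

lemma Lm_add_single_inr (σ : Vt n →₀ ℕ) (p : ZIdx (n + 1)) :
    Lm n a (σ + Finsupp.single (Sum.inr p) 1) = Lm n a σ +
      (Finsupp.single (Sum.inl p.1.1) (a p.1.1) + Finsupp.single (Sum.inr p.1.2) 1) := by
  ext u
  rw [Finsupp.add_apply, Finsupp.add_apply, Lm_apply, Lm_apply]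
  cases u with
  | inl i' =>
    simp only [Lfun, Sum.elim_inl]
    rw [mL_add_single_inr, apply_add_single_inr_inl]
    have h2 : (Finsupp.single (Sum.inl p.1.1 : Fin (n+1) ⊕ Fin (n+1)) (a p.1.1)) (Sum.inl i')
        = if p.1.1 = i' then a p.1.1 else 0 := by
      simp [Finsupp.single_apply]
    have h3 : (Finsupp.single (Sum.inr p.1.2 : Fin (n+1) ⊕ Fin (n+1)) 1) (Sum.inl i') = 0 := by
      simp [Finsupp.single_apply]
    rw [h2, h3]
    by_cases e : p.1.1 = i'
    · rw [if_pos e, if_pos e, e]; ring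
    · rw [if_neg e, if_neg e]; ring
  | inr k' =>
    simp only [Lfun, Sum.elim_inr]
    rw [mR_add_single_inr]
    have h2 : (Finsupp.single (Sum.inl p.1.1 : Fin (n+1) ⊕ Fin (n+1)) (a p.1.1)) (Sum.inr k')
        = 0 := by
      simp [Finsupp.single_apply]
    have h3 : (Finsupp.single (Sum.inr p.1.2 : Fin (n+1) ⊕ Fin (n+1)) 1) (Sum.inr k')
        = if p.1.2 = k' then 1 else 0 := by
      simp [Finsupp.single_apply]
    rw [h2, h3]
    omega

lemma Qp_zero : Qp n (φh n a (monomial (0 : Vt n →₀ ℕ) 1)) (Lm n a 0) := by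
  have hL : Lm n a 0 = 0 := by
    ext u
    rw [Lm_apply]
    cases u <;> simp [Lfun, mL, mR, mLf, mRf]
  rw [hL]
  have hmon : (monomial (0 : Vt n →₀ ℕ) (1:ℂ) : Pt n) = 1 := by
    simp [monomial_zero']
  rw [hmon, map_one]
  constructor
  · intro τ hτ
    have h1 : (1 : Dt n) = monomial 0 1 := by simp [monomial_zero']
    rw [h1, support_monomial, if_neg one_ne_zero, Finset.mem_singleton] at hτ
    subst hτ
    exact ⟨le_rfl, fun _ => rfl⟩
  · simp

lemma QL : ∀ (t : ℕ) (σ : Vt n →₀ ℕ), (∑ v : Vt n, σ v) ≤ t →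
    Qp n (φh n a (monomial σ 1)) (Lm n a σ) := by
  intro t
  induction t with
  | zero =>
    intro σ hσ
    have h0 : σ = 0 := by
      ext v
      have h1 : ∀ v ∈ Finset.univ, σ v = 0 :=
        Finset.sum_eq_zero_iff.mp (Nat.le_zero.mp hσ)
      simp only [Finsupp.coe_zero, Pi.zero_apply]
      exact h1 v (Finset.mem_univ v)
    subst h0
    exact Qp_zero n a
  | succ t IH =>
    intro σ hσ
    by_cases h0 : σ = 0
    · subst h0
      exact Qp_zero n a
    · have hv : ∃ v, 0 < σ v := by
        by_contra h
        push_neg at h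
        refine h0 ?_
        ext v
        have := h v
        simp only [Finsupp.coe_zero, Pi.zero_apply]
        omega
      obtain ⟨v, hvpos⟩ := hv
      obtain ⟨τ, hτd⟩ := decomp1 σ v hvpos
      have htot : (∑ u : Vt n, τ u) ≤ t := by
        have h1 : (∑ u : Vt n, σ u) = (∑ u : Vt n, τ u) + 1 := by
          rw [hτd, tot_add, tot_single]
        omega
      have hQ := IH τ htot
      have hmon : (monomial σ (1:ℂ) : Pt n) = monomial τ 1 * X v := by
        rw [hτd, X, monomial_mul, mul_one]
      rw [hmon, map_mul]
      have hXv : φh n a (X v) = φm n a v := aeval_X _ _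
      rw [hXv]
      cases v with
      | inl i =>
        have hφm : φm n a (Sum.inl i) = monomial (Finsupp.single (Sum.inl i) 1) 1 := by
          rw [φm, X]
        rw [hφm, hτd, Lm_add_single_inl]
        exact Qp_mul_monomial n hQ _
      | inr p =>
        have hφm : φm n a (Sum.inr p) =
            monomial (Finsupp.single (Sum.inl p.1.1) (a p.1.1)
              + Finsupp.single (Sum.inr p.1.2) 1) 1
            - monomial (Finsupp.single (Sum.inl p.1.2) (a p.1.2)
              + Finsupp.single (Sum.inr p.1.1) 1) 1 := by
          rw [φm]
          rw [X_pow_eq_monomial, X_pow_eq_monomial, X, X, monomial_mul, monomial_mul]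
          simp
        rw [hφm, hτd, Lm_add_single_inr]
        refine Qp_mul_sub n hQ _ _ ?_
        rw [wD_add, wD_add, wD_single, wD_single, wD_single, wD_single]
        simp only [wyv, Sum.elim_inl, Sum.elim_inr, Nat.mul_zero, one_mul, Nat.zero_add]
        exact p.2

/-! ### Injectivity of the leading monomial on standard monomials -/

def NC (c : ZIdx (n + 1) → ℕ) : Prop :=
  ∀ p q : ZIdx (n + 1), 0 < c p → 0 < c q →
    ¬(p.1.1 < q.1.1 ∧ q.1.1 < p.1.2 ∧ p.1.2 < q.1.2)

lemma Std_NC (σ : Vt n →₀ ℕ) (h : Std n a σ) : NC n (fun p => σ (Sum.inr p)) := by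
  intro p q hp hq hc
  obtain ⟨h1, h2, h3⟩ := hc
  rcases h.1 p.1.1 q.1.1 p.1.2 q.1.2 p.2 q.2 h1 h2 h3 with h5 | h5
  · exact absurd h5 hp.ne'
  · exact absurd h5 hq.ne'

lemma no_max_diff (σ σ' : Vt n →₀ ℕ) (hs : Std n a σ)
    (hmR : ∀ k, mR n σ k = mR n σ' k)
    (hX : ∀ i, σ (Sum.inl i) + a i * mL n σ i = σ' (Sum.inl i) + a i * mL n σ' i)
    (ha : ∀ i, 0 < a i)
    (i : Fin (n + 1)) (hmax : ∀ l, i < l → mL n σ l = mL n σ' l)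
    (hlt : mL n σ i < mL n σ' i) : False := by
  have hai : a i ≤ σ (Sum.inl i) := by
    have h1 : a i * (mL n σ i + 1) ≤ a i * mL n σ' i := Nat.mul_le_mul_left _ hlt
    rw [Nat.mul_add, Nat.mul_one] at h1
    have h2 := hX i
    omega
  have hstr : ∀ p : ZIdx (n + 1), p.1.1 < i → i < p.1.2 → σ (Sum.inr p) = 0 := by
    intro p hp1 hp2
    by_contra hne
    have := hs.2 p.1.1 i p.1.2 p.2 hp1 hp2 (Nat.pos_of_ne_zero hne)
    omega
  have c1 : (∑ p : ZIdx (n + 1), if i ≤ p.1.1 then σ (Sum.inr p) else 0)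
      = ∑ p : ZIdx (n + 1), if i < p.1.2 then σ (Sum.inr p) else 0 := by
    refine Finset.sum_congr rfl fun p _ => ?_
    by_cases h1 : i ≤ p.1.1
    · rw [if_pos h1, if_pos (lt_of_le_of_lt h1 p.2)]
    · rw [if_neg h1]
      by_cases h2 : i < p.1.2
      · rw [if_pos h2, hstr p (not_le.mp h1) h2]
      · rw [if_neg h2]
  have c2 : (∑ p : ZIdx (n + 1), if i ≤ p.1.1 then σ' (Sum.inr p) else 0)
      ≤ ∑ p : ZIdx (n + 1), if i < p.1.2 then σ' (Sum.inr p) else 0 := by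
    refine Finset.sum_le_sum fun p _ => ?_
    by_cases h1 : i ≤ p.1.1
    · rw [if_pos h1, if_pos (lt_of_le_of_lt h1 p.2)]
    · rw [if_neg h1]; exact Nat.zero_le _
  have c3 : ∀ τ : Vt n →₀ ℕ, (∑ p : ZIdx (n + 1), if i < p.1.2 then τ (Sum.inr p) else 0)
      = ∑ k : Fin (n + 1), if i < k then mR n τ k else 0 := by
    intro τ
    have step1 : ∀ k : Fin (n + 1), (if i < k then mR n τ k else 0)
        = ∑ p : ZIdx (n + 1), if (↑p : Fin (n+1) × Fin (n+1)).2 = k then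
            (if i < (↑p : Fin (n+1) × Fin (n+1)).2 then τ (Sum.inr p) else 0) else 0 := by
      intro k
      by_cases h : i < k
      · rw [if_pos h]
        simp only [mR, mRf]
        refine Finset.sum_congr rfl fun p _ => ?_
        by_cases e : (↑p : Fin (n+1) × Fin (n+1)).2 = k
        · rw [if_pos e, if_pos e, if_pos (e ▸ h)]
        · rw [if_neg e, if_neg e]
      · rw [if_neg h]
        refine (Finset.sum_eq_zero fun p _ => ?_).symm
        by_cases e : (↑p : Fin (n+1) × Fin (n+1)).2 = k
        · rw [if_pos e, if_neg (e ▸ h)]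
        · rw [if_neg e]
    rw [Finset.sum_congr rfl fun k _ => step1 k, Finset.sum_comm]
    refine Finset.sum_congr rfl fun p _ => ?_
    rw [Finset.sum_ite_eq Finset.univ ((↑p : Fin (n+1) × Fin (n+1)).2)]
    simp
  have c4 : ∀ τ : Vt n →₀ ℕ, (∑ p : ZIdx (n + 1), if i ≤ p.1.1 then τ (Sum.inr p) else 0)
      = mL n τ i + ∑ l : Fin (n + 1), if i < l then mL n τ l else 0 := by
    intro τ
    have step1 : ∀ l : Fin (n + 1), (if i ≤ l then mL n τ l else 0)
        = ∑ p : ZIdx (n + 1), if (↑p : Fin (n+1) × Fin (n+1)).1 = l then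
            (if i ≤ (↑p : Fin (n+1) × Fin (n+1)).1 then τ (Sum.inr p) else 0) else 0 := by
      intro l
      by_cases h : i ≤ l
      · rw [if_pos h]
        simp only [mL, mLf]
        refine Finset.sum_congr rfl fun p _ => ?_
        by_cases e : (↑p : Fin (n+1) × Fin (n+1)).1 = l
        · rw [if_pos e, if_pos e, if_pos (e ▸ h)]
        · rw [if_neg e, if_neg e]
      · rw [if_neg h]
        refine (Finset.sum_eq_zero fun p _ => ?_).symm
        by_cases e : (↑p : Fin (n+1) × Fin (n+1)).1 = l
        · rw [if_pos e, if_neg (e ▸ h)]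
        · rw [if_neg e]
    have hsplit : ∀ l : Fin (n + 1), (if i ≤ l then mL n τ l else 0)
        = (if l = i then mL n τ l else 0) + (if i < l then mL n τ l else 0) := by
      intro l
      rcases lt_trichotomy i l with h | h | h
      · rw [if_pos h.le, if_neg h.ne', if_pos h, zero_add]
      · rw [if_pos h.le, if_pos h.symm, if_neg (by rw [h]; exact lt_irrefl l), add_zero]
      · rw [if_neg (not_le.mpr h), if_neg h.ne, if_neg (not_lt.mpr h.le), add_zero]
    calc (∑ p : ZIdx (n + 1), if i ≤ p.1.1 then τ (Sum.inr p) else 0)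
        = ∑ l : Fin (n + 1), if i ≤ l then mL n τ l else 0 := by
          rw [Finset.sum_congr rfl fun l _ => step1 l, Finset.sum_comm]
          refine Finset.sum_congr rfl fun p _ => ?_
          rw [Finset.sum_ite_eq Finset.univ ((↑p : Fin (n+1) × Fin (n+1)).1)]
          simp
      _ = mL n τ i + ∑ l : Fin (n + 1), if i < l then mL n τ l else 0 := by
          rw [Finset.sum_congr rfl fun l _ => hsplit l, Finset.sum_add_distrib,
            Finset.sum_ite_eq' Finset.univ i]
          simp
  have hT : (∑ l : Fin (n + 1), if i < l then mL n σ l else 0)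
      = ∑ l : Fin (n + 1), if i < l then mL n σ' l else 0 := by
    refine Finset.sum_congr rfl fun l _ => ?_
    by_cases h : i < l
    · rw [if_pos h, if_pos h, hmax l h]
    · rw [if_neg h, if_neg h]
  have hRs : (∑ k : Fin (n + 1), if i < k then mR n σ k else 0)
      = ∑ k : Fin (n + 1), if i < k then mR n σ' k else 0 := by
    refine Finset.sum_congr rfl fun k _ => ?_
    rw [hmR k]
  have e1 := c4 σ
  have e2 := c4 σ'
  have e3 := c3 σ
  have e4 := c3 σ'
  omega

lemma mL_eq (σ σ' : Vt n →₀ ℕ) (hs : Std n a σ) (hs' : Std n a σ')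
    (hmR : ∀ k, mR n σ k = mR n σ' k)
    (hX : ∀ i, σ (Sum.inl i) + a i * mL n σ i = σ' (Sum.inl i) + a i * mL n σ' i)
    (ha : ∀ i, 0 < a i) :
    ∀ i, mL n σ i = mL n σ' i := by
  by_contra h
  push_neg at h
  obtain ⟨i0, hi0⟩ := h
  have hSne : (Finset.univ.filter (fun l : Fin (n + 1) => mL n σ l ≠ mL n σ' l)).Nonempty :=
    ⟨i0, by simp [hi0]⟩
  set i := Finset.max' _ hSne with hi
  have hiS := Finset.max'_mem _ hSne
  rw [Finset.mem_filter] at hiS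
  have hine : mL n σ i ≠ mL n σ' i := hiS.2
  have hmax : ∀ l, i < l → mL n σ l = mL n σ' l := by
    intro l hl
    by_contra hne
    exact absurd (Finset.le_max' _ l (Finset.mem_filter.mpr ⟨Finset.mem_univ _, hne⟩))
      (not_le.mpr hl)
  rcases Nat.lt_or_ge (mL n σ i) (mL n σ' i) with hlt | hge
  · exact no_max_diff n a σ σ' hs hmR hX ha i hmax hlt
  · exact no_max_diff n a σ' σ hs' (fun k => (hmR k).symm) (fun j => (hX j).symm) ha i
      (fun l hl => (hmax l hl).symm) (by omega)

lemma mLf_pos {c : ZIdx (n + 1) → ℕ} {p : ZIdx (n + 1)} (h : 0 < c p) :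
    0 < mLf n c p.1.1 := by
  have h1 := Finset.single_le_sum
    (f := fun q : ZIdx (n + 1) => if (↑q : Fin (n+1) × Fin (n+1)).1 = p.1.1 then c q else 0)
    (fun q _ => Nat.zero_le _) (Finset.mem_univ p)
  have h2 : c p ≤ mLf n c p.1.1 := by simpa [mLf] using h1
  exact lt_of_lt_of_le h h2

lemma mRf_pos {c : ZIdx (n + 1) → ℕ} {p : ZIdx (n + 1)} (h : 0 < c p) :
    0 < mRf n c p.1.2 := by
  have h1 := Finset.single_le_sum
    (f := fun q : ZIdx (n + 1) => if (↑q : Fin (n+1) × Fin (n+1)).2 = p.1.2 then c q else 0)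
    (fun q _ => Nat.zero_le _) (Finset.mem_univ p)
  have h2 : c p ≤ mRf n c p.1.2 := by simpa [mRf] using h1
  exact lt_of_lt_of_le h h2

lemma exists_pos_of_mRf {c : ZIdx (n + 1) → ℕ} {k : Fin (n + 1)} (h : 0 < mRf n c k) :
    ∃ p : ZIdx (n + 1), p.1.2 = k ∧ 0 < c p := by
  by_contra h2
  push_neg at h2
  have : mRf n c k = 0 := Finset.sum_eq_zero fun p _ => by
    by_cases e : (↑p : Fin (n+1) × Fin (n+1)).2 = k
    · rw [if_pos e]
      have := h2 p e
      omega
    · rw [if_neg e]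
  omega

lemma exists_pos_of_mLf {c : ZIdx (n + 1) → ℕ} {j : Fin (n + 1)} (h : 0 < mLf n c j) :
    ∃ p : ZIdx (n + 1), p.1.1 = j ∧ 0 < c p := by
  by_contra h2
  push_neg at h2
  have : mLf n c j = 0 := Finset.sum_eq_zero fun p _ => by
    by_cases e : (↑p : Fin (n+1) × Fin (n+1)).1 = j
    · rw [if_pos e]
      have := h2 p e
      omega
    · rw [if_neg e]
  omega

lemma total_eq_mRf (c : ZIdx (n + 1) → ℕ) :
    (∑ p : ZIdx (n + 1), c p) = ∑ k : Fin (n + 1), mRf n c k := by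
  simp only [mRf]
  rw [Finset.sum_comm]
  refine Finset.sum_congr rfl fun p _ => ?_
  rw [Finset.sum_ite_eq Finset.univ ((↑p : Fin (n+1) × Fin (n+1)).2)]
  simp

lemma pick (c : ZIdx (n + 1) → ℕ) (hnc : NC n c) (k1 j1 : Fin (n + 1))
    (hk1pos : 0 < mRf n c k1) (hk1min : ∀ k, 0 < mRf n c k → k1 ≤ k)
    (hj1pos : 0 < mLf n c j1) (hj1lt : j1 < k1)
    (hj1max : ∀ j, 0 < mLf n c j → j < k1 → j ≤ j1) :
    0 < c ⟨(j1, k1), hj1lt⟩ := by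
  obtain ⟨p, hp2, hppos⟩ := exists_pos_of_mRf n hk1pos
  have hple : p.1.1 ≤ j1 := hj1max p.1.1 (mLf_pos n hppos) (hp2 ▸ p.2)
  rcases eq_or_lt_of_le hple with heq | hlt2
  · have hp : p = ⟨(j1, k1), hj1lt⟩ := Subtype.ext (by
      rw [Prod.ext_iff]; exact ⟨heq, hp2⟩)
    rwa [← hp]
  · obtain ⟨q, hq1, hqpos⟩ := exists_pos_of_mLf n hj1pos
    have hqk : k1 ≤ q.1.2 := hk1min _ (mRf_pos n hqpos)
    rcases eq_or_lt_of_le hqk with heq2 | hlt3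
    · have hq : q = ⟨(j1, k1), hj1lt⟩ := Subtype.ext (by
        rw [Prod.ext_iff]; exact ⟨hq1, heq2.symm⟩)
      rwa [← hq]
    · exact absurd ⟨hq1 ▸ hlt2, hp2 ▸ (hq1 ▸ hj1lt), hp2 ▸ hlt3⟩ (hnc p q hppos hqpos)

lemma match_zero (c c' : ZIdx (n + 1) → ℕ)
    (hmRq : ∀ k, mRf n c k = mRf n c' k) (h0 : (∑ p : ZIdx (n + 1), c p) = 0) : c = c' := by
  have h0' : (∑ p : ZIdx (n + 1), c' p) = 0 := by
    rw [total_eq_mRf, ← Finset.sum_congr rfl fun k _ => hmRq k, ← total_eq_mRf, h0]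
  funext p
  have h1 := Finset.single_le_sum (f := c) (fun q _ => Nat.zero_le _) (Finset.mem_univ p)
  have h2 := Finset.single_le_sum (f := c') (fun q _ => Nat.zero_le _) (Finset.mem_univ p)
  omega

lemma match_step (T : ℕ)
    (IH : ∀ c c' : ZIdx (n + 1) → ℕ, NC n c → NC n c' →
      (∀ i, mLf n c i = mLf n c' i) → (∀ k, mRf n c k = mRf n c' k) →
      (∑ p : ZIdx (n + 1), c p) ≤ T → c = c')
    (c c' : ZIdx (n + 1) → ℕ) (hnc : NC n c) (hnc' : NC n c')
    (hmLq : ∀ i, mLf n c i = mLf n c' i) (hmRq : ∀ k, mRf n c k = mRf n c' k)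
    (hT : (∑ p : ZIdx (n + 1), c p) ≤ T + 1)
    (z : ZIdx (n + 1)) (hz : 0 < c z) (hz' : 0 < c' z) : c = c' := by
  set d := fun p : ZIdx (n + 1) => if z = p then c p - 1 else c p with hd
  set d' := fun p : ZIdx (n + 1) => if z = p then c' p - 1 else c' p with hd'
  have hcd : c = fun p => d p + (if z = p then 1 else 0) := by
    funext p
    by_cases e : z = p
    · rw [hd]
      simp only [if_pos e]
      rw [← e]
      omega
    · simp only [hd, if_neg e, add_zero]
  have hcd' : c' = fun p => d' p + (if z = p then 1 else 0) := by
    funext p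
    by_cases e : z = p
    · rw [hd']
      simp only [if_pos e]
      rw [← e]
      omega
    · simp only [hd', if_neg e, add_zero]
  have hdle : ∀ p, d p ≤ c p := fun p => by
    rw [hd]; by_cases e : z = p <;> simp [e] <;> omega
  have hdle' : ∀ p, d' p ≤ c' p := fun p => by
    rw [hd']; by_cases e : z = p <;> simp [e] <;> omega
  have hdnc : NC n d := fun p q hp hq =>
    hnc p q (lt_of_lt_of_le hp (hdle p)) (lt_of_lt_of_le hq (hdle q))
  have hdnc' : NC n d' := fun p q hp hq =>
    hnc' p q (lt_of_lt_of_le hp (hdle' p)) (lt_of_lt_of_le hq (hdle' q))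
  have hmLd : ∀ i, mLf n d i = mLf n d' i := by
    intro i
    have e1 : mLf n c i = mLf n d i + (if z.1.1 = i then 1 else 0) := by
      conv_lhs => rw [hcd]
      rw [mLf_add]
      congr 1
      exact sum_ind z (fun q => (↑q : Fin (n+1) × Fin (n+1)).1 = i) 1
    have e2 : mLf n c' i = mLf n d' i + (if z.1.1 = i then 1 else 0) := by
      conv_lhs => rw [hcd']
      rw [mLf_add]
      congr 1
      exact sum_ind z (fun q => (↑q : Fin (n+1) × Fin (n+1)).1 = i) 1
    have := hmLq i
    omega
  have hmRd : ∀ k, mRf n d k = mRf n d' k := by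
    intro k
    have e1 : mRf n c k = mRf n d k + (if z.1.2 = k then 1 else 0) := by
      conv_lhs => rw [hcd]
      rw [mRf_add]
      congr 1
      exact sum_ind z (fun q => (↑q : Fin (n+1) × Fin (n+1)).2 = k) 1
    have e2 : mRf n c' k = mRf n d' k + (if z.1.2 = k then 1 else 0) := by
      conv_lhs => rw [hcd']
      rw [mRf_add]
      congr 1
      exact sum_ind z (fun q => (↑q : Fin (n+1) × Fin (n+1)).2 = k) 1
    have := hmRq k
    omega
  have htotd : (∑ p : ZIdx (n + 1), d p) ≤ T := by
    have e1 : (∑ p : ZIdx (n + 1), c p)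
        = (∑ p : ZIdx (n + 1), d p) + ∑ p : ZIdx (n + 1), (if z = p then 1 else 0) := by
      conv_lhs => rw [hcd]
      rw [Finset.sum_add_distrib]
    rw [Finset.sum_ite_eq Finset.univ z] at e1
    simp only [Finset.mem_univ, if_pos] at e1
    omega
  have hdd : d = d' := IH d d' hdnc hdnc' hmLd hmRd htotd
  rw [hcd, hcd', hdd]

lemma match_aux : ∀ (T : ℕ) (c c' : ZIdx (n + 1) → ℕ), NC n c → NC n c' →
    (∀ i, mLf n c i = mLf n c' i) → (∀ k, mRf n c k = mRf n c' k) →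
    (∑ p : ZIdx (n + 1), c p) ≤ T → c = c' := by
  intro T
  induction T with
  | zero =>
    intro c c' _ _ _ hmRq hT
    exact match_zero n c c' hmRq (Nat.le_zero.mp hT)
  | succ T IH =>
    intro c c' hnc hnc' hmLq hmRq hT
    by_cases h0 : (∑ p : ZIdx (n + 1), c p) = 0
    · exact match_zero n c c' hmRq h0
    · have hex : ∃ p : ZIdx (n + 1), 0 < c p := by
        by_contra h
        push_neg at h
        exact h0 (Finset.sum_eq_zero fun p _ => by have := h p; omega)
      obtain ⟨p0, hp0⟩ := hex
      have hKne : (Finset.univ.filter (fun k : Fin (n + 1) => 0 < mRf n c k)).Nonempty :=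
        ⟨p0.1.2, Finset.mem_filter.mpr ⟨Finset.mem_univ _, mRf_pos n hp0⟩⟩
      set Ks := Finset.univ.filter (fun k : Fin (n + 1) => 0 < mRf n c k) with hKs
      set k1 := Ks.min' hKne with hk1
      have hk1mem := Finset.min'_mem Ks hKne
      have hk1pos : 0 < mRf n c k1 := (Finset.mem_filter.mp hk1mem).2
      have hk1min : ∀ k, 0 < mRf n c k → k1 ≤ k := fun k hk =>
        Finset.min'_le Ks k (Finset.mem_filter.mpr ⟨Finset.mem_univ _, hk⟩)
      obtain ⟨p1, hp1k, hp1pos⟩ := exists_pos_of_mRf n hk1pos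
      have hJne : (Finset.univ.filter
          (fun j : Fin (n + 1) => 0 < mLf n c j ∧ j < k1)).Nonempty :=
        ⟨p1.1.1, Finset.mem_filter.mpr ⟨Finset.mem_univ _, mLf_pos n hp1pos, hp1k ▸ p1.2⟩⟩
      set Js := Finset.univ.filter (fun j : Fin (n + 1) => 0 < mLf n c j ∧ j < k1) with hJs
      set j1 := Js.max' hJne with hj1
      have hj1mem := Finset.max'_mem Js hJne
      have hj1pos : 0 < mLf n c j1 := (Finset.mem_filter.mp hj1mem).2.1
      have hj1lt : j1 < k1 := (Finset.mem_filter.mp hj1mem).2.2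
      have hj1max : ∀ j, 0 < mLf n c j → j < k1 → j ≤ j1 := fun j h1 h2 =>
        Finset.le_max' Js j (Finset.mem_filter.mpr ⟨Finset.mem_univ _, h1, h2⟩)
      have hz : 0 < c ⟨(j1, k1), hj1lt⟩ :=
        pick n c hnc k1 j1 hk1pos hk1min hj1pos hj1lt hj1max
      have hz' : 0 < c' ⟨(j1, k1), hj1lt⟩ :=
        pick n c' hnc' k1 j1 (hmRq k1 ▸ hk1pos) (fun k hk => hk1min k (by rw [hmRq k]; exact hk))
          (hmLq j1 ▸ hj1pos) hj1lt (fun j h1 h2 => hj1max j (by rw [hmLq j]; exact h1) h2)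
      exact match_step n T IH c c' hnc hnc' hmLq hmRq hT ⟨(j1, k1), hj1lt⟩ hz hz'

lemma Lm_inj (ha : ∀ i, 0 < a i) (σ σ' : Vt n →₀ ℕ) (hs : Std n a σ) (hs' : Std n a σ')
    (hL : Lm n a σ = Lm n a σ') : σ = σ' := by
  have hcomp : ∀ u, Lfun n a σ u = Lfun n a σ' u := by
    intro u
    rw [← Lm_apply, ← Lm_apply, hL]
  have hmR : ∀ k, mR n σ k = mR n σ' k := fun k => hcomp (Sum.inr k)
  have hX : ∀ i, σ (Sum.inl i) + a i * mL n σ i = σ' (Sum.inl i) + a i * mL n σ' i :=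
    fun i => hcomp (Sum.inl i)
  have hmL := mL_eq n a σ σ' hs hs' hmR hX ha
  have hZ : (fun p : ZIdx (n + 1) => σ (Sum.inr p)) = fun p => σ' (Sum.inr p) := by
    refine match_aux n (∑ p : ZIdx (n + 1), σ (Sum.inr p)) _ _
      (Std_NC n a σ hs) (Std_NC n a σ' hs') (fun i => hmL i) (fun k => hmR k) le_rfl
  ext v
  cases v with
  | inl i =>
    have h := hX i
    rw [hmL i] at h
    omega
  | inr p => exact congrFun hZ p

lemma std_indep (ha : ∀ i, 0 < a i) (g : Pt n) (hstd : ∀ τ ∈ g.support, Std n a τ)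
    (hker : φh n a g = 0) : g = 0 := by
  by_contra hg
  have hne : g.support.Nonempty := Finset.nonempty_iff_ne_empty.mpr (fun h => hg (support_eq_empty.mp h))
  obtain ⟨σ₀, hσ₀mem, hσ₀max⟩ :=
    Finset.exists_max_image g.support (fun σ => wD n (Lm n a σ)) hne
  have h1 : φh n a g = ∑ σ ∈ g.support, φh n a (monomial σ (coeff σ g)) := by
    rw [← map_sum]
    exact congrArg _ (as_sum g)
  have h2 : ∀ σ : Vt n →₀ ℕ, φh n a (monomial σ (coeff σ g))
      = C (coeff σ g) * φh n a (monomial σ 1) := by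
    intro σ
    rw [show (monomial σ (coeff σ g) : Pt n) = C (coeff σ g) * monomial σ 1 by
      rw [C_mul_monomial, mul_one]]
    rw [map_mul]
    congr 1
    rw [show (C (coeff σ g) : Pt n) = algebraMap ℂ (Pt n) (coeff σ g) from rfl,
      AlgHom.commutes]
    rfl
  have h3 : coeff (Lm n a σ₀) (φh n a g)
      = ∑ σ ∈ g.support, coeff σ g * coeff (Lm n a σ₀) (φh n a (monomial σ 1)) := by
    rw [h1]
    rw [show (∑ σ ∈ g.support, φh n a (monomial σ (coeff σ g)))
        = ∑ σ ∈ g.support, C (coeff σ g) * φh n a (monomial σ 1) from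
      Finset.sum_congr rfl fun σ _ => h2 σ]
    rw [coeff_sum]
    exact Finset.sum_congr rfl fun σ _ => coeff_C_mul _ _ _
  have h4 : ∀ σ ∈ g.support, σ ≠ σ₀ → coeff (Lm n a σ₀) (φh n a (monomial σ 1)) = 0 := by
    intro σ hσ hne2
    by_contra hc
    have hQLσ := QL n a (∑ v : Vt n, σ v) σ le_rfl
    have hmem : Lm n a σ₀ ∈ (φh n a (monomial σ 1)).support := mem_support_iff.mpr hc
    have h5 := hQLσ.1 _ hmem
    have h6 : wD n (Lm n a σ) ≤ wD n (Lm n a σ₀) := hσ₀max σ hσ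
    have h7 : Lm n a σ₀ = Lm n a σ := h5.2 (by omega)
    exact hne2 (Lm_inj n a ha σ σ₀ (hstd σ hσ) (hstd σ₀ hσ₀mem) h7.symm)
  have h8 : coeff (Lm n a σ₀) (φh n a (monomial σ₀ 1)) = 1 :=
    (QL n a (∑ v : Vt n, σ₀ v) σ₀ le_rfl).2
  rw [Finset.sum_eq_single σ₀ (fun σ hσ hne2 => by rw [h4 σ hσ hne2, mul_zero])
    (fun h => absurd hσ₀mem h)] at h3
  rw [h8, mul_one, hker] at h3
  simp only [coeff_zero] at h3
  exact (mem_support_iff.mp hσ₀mem) h3.symm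

lemma ker_le_Ig (ha : ∀ i, 0 < a i) :
    RingHom.ker (φh n a).toRingHom ≤ Ig n a := by
  intro f hf
  obtain ⟨g, hfg, hstd⟩ := spanStd n a f
  have hφg : φh n a g = 0 := by
    have h1 : φh n a (f - g) = 0 := Ig_le_ker n a hfg
    have h2 : φh n a f = 0 := hf
    rw [map_sub, h2, zero_sub, neg_eq_zero] at h1
    exact h1
  have hg0 : g = 0 := std_indep n a ha g hstd hφg
  rw [hg0, sub_zero] at hfg
  exact hfg

theorem main (ha : ∀ i, 0 < a i) : (Ig n a).IsPrime := by
  have heq : Ig n a = RingHom.ker (φh n a).toRingHom :=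
    le_antisymm (Ig_le_ker n a) (ker_le_Ig n a ha)
  rw [heq]
  exact RingHom.ker_isPrime _

end Stmt4

theorem stmt_4 (n : ℕ) (a : Fin (n + 1) → ℕ) (ha : ∀ i, 0 < a i) :
    (Ideal.span
      ({f : MvPolynomial (Fin (n + 1) ⊕ ZIdx (n + 1)) ℂ |
          ∃ (i j k : Fin (n + 1)) (hij : i < j) (hjk : j < k),
            f = X (Sum.inl j) ^ a j * X (Sum.inr ⟨(i, k), hij.trans hjk⟩)
              - X (Sum.inl k) ^ a k * X (Sum.inr ⟨(i, j), hij⟩)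
              - X (Sum.inl i) ^ a i * X (Sum.inr ⟨(j, k), hjk⟩)} ∪
       {f : MvPolynomial (Fin (n + 1) ⊕ ZIdx (n + 1)) ℂ |
          ∃ (i j k l : Fin (n + 1)) (hij : i < j) (hjk : j < k) (hkl : k < l),
            f = X (Sum.inr ⟨(i, j), hij⟩) * X (Sum.inr ⟨(k, l), hkl⟩)
              - X (Sum.inr ⟨(i, k), hij.trans hjk⟩) * X (Sum.inr ⟨(j, l), hjk.trans hkl⟩)
              + X (Sum.inr ⟨(i, l), (hij.trans hjk).trans hkl⟩)
                  * X (Sum.inr ⟨(j, k), hjk⟩)})).IsPrime := by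
  exact Stmt4.main n a ha
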